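/- The sequence whose k-th term is 2^k · Σ_{n ≥ k} √(2 − c_{n−1}) / c_n converges to π as k → ∞. -/

import Mathlib

open Real Filter

/-- The nested radicals `c 0 = 0`, `c (k+1) = √(2 + c k)`. -/
noncomputable def c : ℕ → ℝ
  | 0 => 0
  | k + 1 => Real.sqrt (2 + c k)


lemma c_eq (k : ℕ) : c k = 2 * Real.cos (π / 2 ^ (k + 1)) := by
  induction k with
  | zero => simp [c]
  | succ k ih =>
    have hpos : 0 < π / 2 ^ (k + 2) := by positivity
    have hlt : π / 2 ^ (k + 2) < π / 2 := by
      apply div_lt_div_of_pos_left pi_pos (by norm_num)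
      have : (2:ℝ) ^ 1 < 2 ^ (k + 2) := by
        apply pow_lt_pow_right₀ (by norm_num); omega
      simpa using this
    have hcos : 0 < Real.cos (π / 2 ^ (k + 2)) :=
      Real.cos_pos_of_mem_Ioo ⟨by linarith, hlt⟩
    have hang : (2:ℝ) * (π / 2 ^ (k + 2)) = π / 2 ^ (k + 1) := by
      rw [pow_succ]; field_simp
    have key : 2 + c k = (2 * Real.cos (π / 2 ^ (k + 2))) ^ 2 := by
      rw [ih, mul_pow, Real.cos_sq, hang]; ring
    show Real.sqrt (2 + c k) = _
    rw [key, Real.sqrt_sq (by positivity)]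

lemma term_eq (m : ℕ) :
    Real.sqrt (2 - c ((m + 1) - 1)) / c (m + 1) = Real.tan (π / 2 ^ (m + 2)) := by
  have hpos : 0 < π / 2 ^ (m + 2) := by positivity
  have hlt : π / 2 ^ (m + 2) < π / 2 := by
    apply div_lt_div_of_pos_left pi_pos (by norm_num)
    have : (2:ℝ) ^ 1 < 2 ^ (m + 2) := by
      apply pow_lt_pow_right₀ (by norm_num); omega
    simpa using this
  have hcos : 0 < Real.cos (π / 2 ^ (m + 2)) :=
    Real.cos_pos_of_mem_Ioo ⟨by linarith, hlt⟩
  have hsin : 0 < Real.sin (π / 2 ^ (m + 2)) := Real.sin_pos_of_pos_of_lt_pi hpos (by linarith [pi_pos])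
  have hang : (2:ℝ) * (π / 2 ^ (m + 2)) = π / 2 ^ (m + 1) := by
    rw [pow_succ]; field_simp
  have key : 2 - c m = (2 * Real.sin (π / 2 ^ (m + 2))) ^ 2 := by
    rw [c_eq, mul_pow, Real.sin_sq_eq_half_sub, hang]; ring
  simp only [Nat.add_sub_cancel]
  rw [key, Real.sqrt_sq (by positivity), c_eq, Real.tan_eq_sin_div_cos]
  have h2 : (m + 1) + 1 = m + 2 := rfl
  rw [h2]
  field_simp

lemma tan_le_bound {x : ℝ} (h0 : 0 < x) (h1 : x ≤ 1) : Real.tan x ≤ x + x ^ 3 := by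
  have hlt : x < π / 2 := lt_of_le_of_lt h1 (by linarith [Real.pi_gt_three])
  have hcos : 0 < Real.cos x := Real.cos_pos_of_mem_Ioo ⟨by linarith, hlt⟩
  rw [Real.tan_eq_sin_div_cos, div_le_iff₀ hcos]
  have hsin : Real.sin x ≤ x := Real.sin_le h0.le
  have hcb : 1 - x ^ 2 / 2 ≤ Real.cos x := Real.one_sub_sq_div_two_le_cos
  have h5 : x ^ 5 ≤ x ^ 3 := pow_le_pow_of_le_one h0.le h1 (by norm_num)
  nlinarith [mul_le_mul_of_nonneg_left hcb (by positivity : (0:ℝ) ≤ x + x ^ 3)]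

lemma le_tan_bound {x : ℝ} (h0 : 0 < x) (h1 : x ≤ 1) : x ≤ Real.tan x :=
  (Real.lt_tan h0 (lt_of_le_of_lt h1 (by linarith [Real.pi_gt_three]))).le

lemma tsum_tan_bounds {a : ℝ} (h0 : 0 < a) (h1 : a ≤ 1) :
    2 * a ≤ (∑' m : ℕ, Real.tan (a * (1/2) ^ m)) ∧
    (∑' m : ℕ, Real.tan (a * (1/2) ^ m)) ≤ 2 * a + a ^ 3 * (8/7) := by
  have hx : ∀ m : ℕ, 0 < a * (1/2:ℝ) ^ m := fun m => by positivity
  have hx1 : ∀ m : ℕ, a * (1/2:ℝ) ^ m ≤ 1 := fun m => by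
    calc a * (1/2:ℝ) ^ m ≤ a * 1 := by
          apply mul_le_mul_of_nonneg_left _ h0.le
          exact pow_le_one₀ (by norm_num) (by norm_num)
      _ ≤ 1 := by linarith
  have hlb : ∀ m : ℕ, a * (1/2:ℝ) ^ m ≤ Real.tan (a * (1/2) ^ m) :=
    fun m => le_tan_bound (hx m) (hx1 m)
  have hub : ∀ m : ℕ, Real.tan (a * (1/2) ^ m) ≤ a * (1/2:ℝ) ^ m + (a * (1/2:ℝ) ^ m) ^ 3 :=
    fun m => tan_le_bound (hx m) (hx1 m)
  have hcube : ∀ m : ℕ, (a * (1/2:ℝ) ^ m) ^ 3 = a ^ 3 * (1/8:ℝ) ^ m := by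
    intro m
    rw [mul_pow, ← pow_mul, mul_comm m 3, pow_mul]
    norm_num
  have sum1 : Summable (fun m : ℕ => a * (1/2:ℝ) ^ m) :=
    (summable_geometric_of_lt_one (by norm_num) (by norm_num)).mul_left a
  have sum3 : Summable (fun m : ℕ => (a * (1/2:ℝ) ^ m) ^ 3) := by
    simp only [hcube]
    exact (summable_geometric_of_lt_one (by norm_num) (by norm_num)).mul_left _
  have sumtan : Summable (fun m : ℕ => Real.tan (a * (1/2) ^ m)) := by
    apply Summable.of_nonneg_of_le (fun m => ((hx m).le.trans (hlb m))) hub (sum1.add sum3)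
  have t1 : (∑' m : ℕ, a * (1/2:ℝ) ^ m) = 2 * a := by
    rw [tsum_mul_left, tsum_geometric_of_lt_one (by norm_num) (by norm_num)]
    norm_num; ring
  have t3 : (∑' m : ℕ, (a * (1/2:ℝ) ^ m) ^ 3) = a ^ 3 * (8/7) := by
    simp only [hcube]
    rw [tsum_mul_left, tsum_geometric_of_lt_one (by norm_num) (by norm_num)]
    norm_num
  constructor
  · calc 2 * a = ∑' m : ℕ, a * (1/2:ℝ) ^ m := t1.symm
      _ ≤ _ := Summable.tsum_le_tsum hlb sum1 sumtan
  · calc (∑' m : ℕ, Real.tan (a * (1/2) ^ m))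
        ≤ ∑' m : ℕ, (a * (1/2:ℝ) ^ m + (a * (1/2:ℝ) ^ m) ^ 3) :=
          Summable.tsum_le_tsum hub sumtan (sum1.add sum3)
      _ = 2 * a + a ^ 3 * (8/7) := by rw [Summable.tsum_add sum1 sum3, t1, t3]

/-- The sequence whose `k`-th term is `2 ^ k * Σ_{n ≥ k} √(2 - c (n - 1)) / c n`
converges to `π` as `k → ∞`. -/
theorem tendsto_two_pow_mul_tsum_pi :
    Filter.Tendsto
      (fun k : ℕ => (2 : ℝ) ^ k *
        ∑' n : {n : ℕ // k ≤ n}, Real.sqrt (2 - c ((n : ℕ) - 1)) / c (n : ℕ))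
      Filter.atTop (nhds Real.pi) := by
  rw [← tendsto_add_atTop_iff_nat 1]
  have key : ∀ j : ℕ,
      (∑' n : {n : ℕ // j + 1 ≤ n}, Real.sqrt (2 - c ((n : ℕ) - 1)) / c (n : ℕ)) =
      ∑' m : ℕ, Real.tan ((π / 2 ^ (j + 2)) * (1/2) ^ m) := by
    intro j
    rw [← Equiv.tsum_eq (Equiv.mk
      (fun m => (⟨m + (j + 1), Nat.le_add_left _ _⟩ : {n : ℕ // j + 1 ≤ n}))
      (fun n => (n : ℕ) - (j + 1)) (fun m => by simp)
      (fun n => by ext; simp [Nat.sub_add_cancel n.2]))]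
    apply tsum_congr
    intro m
    show Real.sqrt (2 - c ((m + (j + 1)) - 1)) / c (m + (j + 1)) = _
    have h1 : m + (j + 1) = (m + j) + 1 := by omega
    rw [h1, term_eq (m + j)]
    congr 1
    rw [div_mul_eq_mul_div, div_pow, one_pow, mul_one_div, div_div, ← pow_add]
    congr 2
    try omega
  have ha : ∀ j : ℕ, 0 < π / 2 ^ (j + 2) := fun j => by positivity
  have ha1 : ∀ j : ℕ, π / 2 ^ (j + 2) ≤ 1 := by
    intro j
    rw [div_le_one (by positivity)]
    calc π ≤ 4 := pi_le_four
      _ ≤ 2 ^ (j + 2) := by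
          calc (4:ℝ) = 2 ^ 2 := by norm_num
            _ ≤ 2 ^ (j + 2) := by
                apply pow_le_pow_right₀ (by norm_num); omega
  apply tendsto_of_tendsto_of_tendsto_of_le_of_le
    (g := fun _ : ℕ => π) (h := fun j : ℕ => π + π ^ 3 / 7 * (1/4 : ℝ) ^ (j + 1))
  · exact tendsto_const_nhds
  · have h4 : Filter.Tendsto (fun j : ℕ => ((1:ℝ)/4) ^ (j + 1)) atTop (nhds 0) := by
      simp only [pow_succ]
      simpa using (tendsto_pow_atTop_nhds_zero_of_lt_one (by norm_num : (0:ℝ) ≤ 1/4)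
        (by norm_num)).mul_const (1/4 : ℝ)
    simpa using tendsto_const_nhds.add (h4.const_mul (π ^ 3 / 7))
  · intro j
    dsimp only
    rw [key j]
    set A := (2:ℝ) ^ (j + 1) with hAdef
    have hA : (0:ℝ) < A := by positivity
    have h2A : (2:ℝ) ^ (j + 2) = 2 * A := by rw [pow_succ, hAdef]; ring
    have hlow := (tsum_tan_bounds (ha j) (ha1 j)).1
    calc π = A * (2 * (π / 2 ^ (j + 2))) := by rw [h2A]; field_simp
      _ ≤ A * ∑' m : ℕ, Real.tan ((π / 2 ^ (j + 2)) * (1/2) ^ m) := by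
          apply mul_le_mul_of_nonneg_left hlow hA.le
  · intro j
    dsimp only
    rw [key j]
    set A := (2:ℝ) ^ (j + 1) with hAdef
    have hA : (0:ℝ) < A := by positivity
    have h2A : (2:ℝ) ^ (j + 2) = 2 * A := by rw [pow_succ, hAdef]; ring
    have h4A : ((1:ℝ)/4) ^ (j + 1) = 1 / A ^ 2 := by
      rw [div_pow, one_pow, hAdef, ← pow_mul, show (4:ℝ) = 2 ^ 2 by norm_num, ← pow_mul,
        mul_comm 2 (j + 1)]
    have hup := (tsum_tan_bounds (ha j) (ha1 j)).2
    calc A * ∑' m : ℕ, Real.tan ((π / 2 ^ (j + 2)) * (1/2) ^ m)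
        ≤ A * (2 * (π / 2 ^ (j + 2)) + (π / 2 ^ (j + 2)) ^ 3 * (8/7)) :=
          mul_le_mul_of_nonneg_left hup hA.le
      _ = π + π ^ 3 / 7 * (1/4 : ℝ) ^ (j + 1) := by
          rw [h2A, h4A]; field_simp; ring
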